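/- If a square of order n occurs in some finite Stewart word, then n is of the form 3^k or 2·3^k: for every finite word t over A, every index i, and every n ≥ 1 with i + 2n ≤ 3^{|t|}, if T(t)[i+j] = T(t)[i+n+j] for all 0 ≤ j < n, then there exists an integer k ≥ 0 with n = 3^k or n = 2·3^k. -/

import Mathlib

/-- The alphabet B = {0, 1, ?}. -/
inductive B : Type
  | b0 : B
  | b1 : B
  | bq : B
deriving DecidableEq, Inhabited, Repr

/-- The six Stewart patterns a = 01?, b = 10?, c = 0?1, d = 1?0, e = ?01, f = ?10. -/
inductive A : Type
  | a : A
  | b : A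
  | c : A
  | d : A
  | e : A
  | f : A
deriving DecidableEq, Inhabited, Repr

open B in
/-- The length-3 word over B associated with a Stewart pattern. -/
def pat : A → List B
  | .a => [b0, b1, bq]
  | .b => [b1, b0, bq]
  | .c => [b0, bq, b1]
  | .d => [b1, bq, b0]
  | .e => [bq, b0, b1]
  | .f => [bq, b1, b0]

/-- Replace the occurrences of `?` in the first word, in order,
by the symbols of the second word. -/
def fill : List B → List B → List B
  | [], _ => []
  | B.bq :: rest, s :: ss => s :: fill rest ss
  | B.bq :: rest, [] => B.bq :: fill rest []
  | x :: rest, ss => x :: fill rest ss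

/-- Helper: the finite Stewart word of the *reverse* of `t`. -/
def Trev : List A → List B
  | [] => [B.bq]
  | g :: t => fill (Trev t ++ Trev t ++ Trev t) (pat g)

/-- The finite Stewart word `T(t)`, of length `3 ^ t.length`:
`T(ε) = ?`, and `T(t g)` is obtained from `T(t)T(t)T(t)` by replacing its
three occurrences of `?`, in order, by the three symbols of the pattern `g`. -/
def stewT (t : List A) : List B := Trev t.reverse

/-- The length-`r` prefix of an infinite sequence of Stewart patterns, as a list. -/
def prefT (t : ℕ → A) (r : ℕ) : List A := List.ofFn (fun i : Fin r => t i)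

/-- The infinite Stewart word `T(𝐭)`: its symbol at position `n` is the eventual
value of `T(t_0 ⋯ t_{r-1})[n]` as `r → ∞`. -/
noncomputable def stewInf (t : ℕ → A) (n : ℕ) : B :=
  Classical.epsilon (fun v : B => ∃ R : ℕ, ∀ r ≥ R, (stewT (prefT t r)).getD n B.bq = v)

/-- `w` occurs as a factor of the infinite word `x`. -/
def FactorOf (w : List B) (x : ℕ → B) : Prop :=
  ∃ i : ℕ, ∀ j : ℕ, j < w.length → w.getD j B.bq = x (i + j)

/-- `w` has period `p ≥ 1`: `w[i] = w[i+p]` for all `0 ≤ i < |w| - p`. -/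
def HasPeriod (w : List B) (p : ℕ) : Prop :=
  1 ≤ p ∧ ∀ i : ℕ, i + p < w.length → w.getD i B.bq = w.getD (i + p) B.bq

/-- The least period `per(w)` of a word. -/
noncomputable def leastPeriod (w : List B) : ℕ := sInf {p | HasPeriod w p}

/-- The exponent `exp(w) = |w| / per(w)` of a word. -/
noncomputable def expo (w : List B) : ℝ := (w.length : ℝ) / (leastPeriod w : ℝ)

/-- The Hamming distance between two Stewart patterns: the number of positions
`p ∈ {0,1,2}` at which the length-3 words differ. -/
def ham (g h : A) : ℕ :=
  (Finset.univ.filter fun p : Fin 3 => (pat g).getD p B.bq ≠ (pat h).getD p B.bq).card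

/-- `t` is ultimately periodic. -/
def UltPeriodic (t : ℕ → A) : Prop :=
  ∃ N : ℕ, ∃ p : ℕ, 1 ≤ p ∧ ∀ n ≥ N, t (n + p) = t n

/-- An infinite word `x` is 3-automatic: there is a finite automaton with output,
reading base-3 representations least-significant-digit first (trailing zeros
allowed), computing `x`. -/
def IsThreeAutomatic (x : ℕ → B) : Prop :=
  ∃ (Q : Type) (_ : Finite Q) (δ : Q → Fin 3 → Q) (q0 : Q) (τ : Q → B),
    ∀ (r : ℕ) (e : Fin r → Fin 3),
      τ (List.foldl δ q0 (List.ofFn fun i => e i)) =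
        x (∑ i : Fin r, (e i).val * 3 ^ (i : ℕ))

def rho : A → ℕ
  | .a => 2 | .b => 2 | .c => 1 | .d => 1 | .e => 0 | .f => 0

def Qv : List A → ℕ
  | [] => 0
  | g :: l => rho g * 3 ^ l.length + Qv l

lemma fill_no_bq (u : List B) (hu : B.bq ∉ u) (rest s : List B) :
    fill (u ++ rest) s = u ++ fill rest s := by
  induction u with
  | nil => simp
  | cons x xs ih =>
    simp only [List.mem_cons, not_or] at hu
    cases x with
    | b0 => simp only [List.cons_append]; rw [show fill (B.b0 :: (xs ++ rest)) s = B.b0 :: fill (xs++rest) s from rfl, ih hu.2]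
    | b1 => simp only [List.cons_append]; rw [show fill (B.b1 :: (xs ++ rest)) s = B.b1 :: fill (xs++rest) s from rfl, ih hu.2]
    | bq => exact absurd rfl hu.1

lemma fill_key (u w : List B) (hu : B.bq ∉ u) (hw : B.bq ∉ w) (rest : List B) (s : B) (ss : List B) :
    fill ((u ++ B.bq :: w) ++ rest) (s :: ss) = (u ++ s :: w) ++ fill rest ss := by
  rw [List.append_assoc, fill_no_bq u hu]
  rw [show ((B.bq :: w) ++ rest) = B.bq :: (w ++ rest) from rfl]
  rw [show fill (B.bq :: (w ++ rest)) (s :: ss) = s :: fill (w ++ rest) ss from rfl]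
  rw [fill_no_bq w hw]
  simp

lemma fill3 (u w : List B) (hu : B.bq ∉ u) (hw : B.bq ∉ w) (s0 s1 s2 : B) :
    fill ((u ++ B.bq :: w) ++ (u ++ B.bq :: w) ++ (u ++ B.bq :: w)) [s0, s1, s2]
    = (u ++ s0 :: w) ++ ((u ++ s1 :: w) ++ (u ++ s2 :: w)) := by
  rw [List.append_assoc, fill_key u w hu hw _ s0 [s1,s2], fill_key u w hu hw _ s1 [s2]]
  rw [show (u ++ B.bq :: w) = (u ++ B.bq :: w) ++ ([] : List B) by simp]
  rw [fill_key u w hu hw [] s2 []]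
  simp [fill]

lemma struct (l : List A) : ∃ u w : List B, Trev l = u ++ B.bq :: w ∧ B.bq ∉ u ∧ B.bq ∉ w ∧
    u.length = Qv l ∧ u.length + (w.length + 1) = 3 ^ l.length := by
  induction l with
  | nil => exact ⟨[], [], rfl, by simp, by simp, rfl, rfl⟩
  | cons g l ih =>
    obtain ⟨u, w, he, hu, hw, hq, hl⟩ := ih
    rw [show Trev (g :: l) = fill (Trev l ++ Trev l ++ Trev l) (pat g) from rfl, he]
    cases g
    case a =>
      rw [show pat A.a = [B.b0, B.b1, B.bq] from rfl, fill3 u w hu hw]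
      refine ⟨(u ++ B.b0::w) ++ ((u ++ B.b1::w) ++ u), w, by simp [List.append_assoc], ?_, hw, ?_, ?_⟩
      · simp [hu, hw]
      · simp [Qv, rho, List.length_append, List.length_cons, hq]; omega
      · simp [List.length_append, List.length_cons]; omega
    case b =>
      rw [show pat A.b = [B.b1, B.b0, B.bq] from rfl, fill3 u w hu hw]
      refine ⟨(u ++ B.b1::w) ++ ((u ++ B.b0::w) ++ u), w, by simp [List.append_assoc], ?_, hw, ?_, ?_⟩
      · simp [hu, hw]
      · simp [Qv, rho, List.length_append, List.length_cons, hq]; omega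
      · simp [List.length_append, List.length_cons]; omega
    case c =>
      rw [show pat A.c = [B.b0, B.bq, B.b1] from rfl, fill3 u w hu hw]
      refine ⟨(u ++ B.b0::w) ++ u, w ++ (u ++ B.b1::w), by simp [List.append_assoc], ?_, ?_, ?_, ?_⟩
      · simp [hu, hw]
      · simp [hu, hw]
      · simp [Qv, rho, List.length_append, List.length_cons, hq]; omega
      · simp [List.length_append, List.length_cons]; omega
    case d =>
      rw [show pat A.d = [B.b1, B.bq, B.b0] from rfl, fill3 u w hu hw]
      refine ⟨(u ++ B.b1::w) ++ u, w ++ (u ++ B.b0::w), by simp [List.append_assoc], ?_, ?_, ?_, ?_⟩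
      · simp [hu, hw]
      · simp [hu, hw]
      · simp [Qv, rho, List.length_append, List.length_cons, hq]; omega
      · simp [List.length_append, List.length_cons]; omega
    case e =>
      rw [show pat A.e = [B.bq, B.b0, B.b1] from rfl, fill3 u w hu hw]
      refine ⟨u, w ++ ((u ++ B.b0::w) ++ (u ++ B.b1::w)), by simp [List.append_assoc], hu, ?_, ?_, ?_⟩
      · simp [hu, hw]
      · simp [Qv, rho, hq]
      · simp [List.length_append, List.length_cons]; omega
    case f =>
      rw [show pat A.f = [B.bq, B.b1, B.b0] from rfl, fill3 u w hu hw]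
      refine ⟨u, w ++ ((u ++ B.b1::w) ++ (u ++ B.b0::w)), by simp [List.append_assoc], hu, ?_, ?_, ?_⟩
      · simp [hu, hw]
      · simp [Qv, rho, hq]
      · simp [List.length_append, List.length_cons]; omega

lemma getD_mid (u w : List B) (x y d : B) (p : ℕ) (hp : p ≠ u.length) :
    (u ++ x :: w).getD p d = (u ++ y :: w).getD p d := by
  rcases lt_or_gt_of_ne hp with h | h
  · rw [List.getD_append _ _ _ _ h, List.getD_append _ _ _ _ h]
  · rw [List.getD_append_right _ _ _ _ h.le, List.getD_append_right _ _ _ _ h.le]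
    obtain ⟨k, hk⟩ : ∃ k, p - u.length = k + 1 := ⟨p - u.length - 1, by omega⟩
    rw [hk, List.getD_cons_succ, List.getD_cons_succ]

lemma lemS (l : List A) : ∀ j p, p < 3 ^ l.length → p % 3 ^ j = Qv l % 3 ^ j →
    (p / 3 ^ j) % 3 ≠ (Qv l / 3 ^ j) % 3 →
    (Trev l).getD p B.bq = (pat (l.getD (l.length - 1 - j) A.a)).getD ((p / 3 ^ j) % 3) B.bq := by
  induction l with
  | nil =>
    intro j p hp hmod hdig
    have hp0 : p = 0 := by simpa using hp
    subst hp0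
    simp [Qv] at hdig
  | cons g l ih =>
    intro j p hp hmod hdig
    obtain ⟨u, w, he, hu, hw, hq, hl⟩ := struct l
    set r := l.length with hr
    have hQlt : Qv l < 3 ^ r := by omega
    have hQQ : Qv (g :: l) = rho g * 3 ^ r + Qv l := rfl
    have hrho : rho g < 3 := by cases g <;> decide
    obtain ⟨s0, s1, s2, hs⟩ : ∃ s0 s1 s2, pat g = [s0, s1, s2] := by
      cases g <;> exact ⟨_, _, _, rfl⟩
    have hword : Trev (g :: l) = (u ++ s0 :: w) ++ ((u ++ s1 :: w) ++ (u ++ s2 :: w)) := by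
      rw [show Trev (g :: l) = fill (Trev l ++ Trev l ++ Trev l) (pat g) from rfl, he, hs,
        fill3 u w hu hw]
    have hlenX : ∀ s : B, (u ++ s :: w).length = 3 ^ r := by
      intro s; simp [List.length_append]; omega
    have h3r : (0:ℕ) < 3 ^ r := pow_pos (by norm_num) r
    have hlen1 : (3:ℕ) ^ (r + 1) = 3 ^ r * 3 := pow_succ 3 r
    have hpp : p < 3 ^ r * 3 := by rw [← hlen1]; simpa using hp
    set c := p / 3 ^ r with hc
    set p' := p % 3 ^ r with hp'
    have hdm : 3 ^ r * c + p' = p := Nat.div_add_mod p (3 ^ r)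
    have hc3 : c < 3 := by rw [hc, Nat.div_lt_iff_lt_mul h3r]; omega
    have hp'lt : p' < 3 ^ r := Nat.mod_lt _ h3r
    clear_value c p'
    have hglen : (g :: l).length = r + 1 := rfl
    rcases lt_trichotomy j r with hjr | hjr | hjr
    · -- j < r : use the induction hypothesis
      have h3jr : (3:ℕ) ^ j ∣ 3 ^ r := pow_dvd_pow 3 hjr.le
      have h3j : (0:ℕ) < 3 ^ j := pow_pos (by norm_num) j
      have hjrpow : (3:ℕ) ^ r = 3 ^ j * 3 ^ (r - j) := by rw [← pow_add]; congr 1; omega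
      have hE : (3:ℕ) ^ (r - j) = 3 * 3 ^ (r - j - 1) := by
        rw [← pow_succ']; congr 1; omega
      have e1 : p' % 3 ^ j = p % 3 ^ j := by rw [hp']; exact Nat.mod_mod_of_dvd p h3jr
      have e2 : Qv (g :: l) % 3 ^ j = Qv l % 3 ^ j := by
        rw [hQQ, hjrpow, show rho g * (3 ^ j * 3 ^ (r - j)) = 3 ^ j * (rho g * 3 ^ (r - j)) by
          ring, Nat.mul_add_mod]
      have e3 : p / 3 ^ j % 3 = p' / 3 ^ j % 3 := by
        conv_lhs => rw [← hdm]
        rw [hjrpow, show 3 ^ j * 3 ^ (r - j) * c + p' = 3 ^ j * (3 ^ (r - j) * c) + p' by ring,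
          Nat.mul_add_div h3j,
          show 3 ^ (r - j) * c + p' / 3 ^ j = 3 * (3 ^ (r - j - 1) * c) + p' / 3 ^ j by
            rw [hE]; ring,
          Nat.mul_add_mod]
      have e4 : Qv (g :: l) / 3 ^ j % 3 = Qv l / 3 ^ j % 3 := by
        rw [hQQ, hjrpow, show rho g * (3 ^ j * 3 ^ (r - j)) + Qv l
            = 3 ^ j * (3 ^ (r - j) * rho g) + Qv l by ring,
          Nat.mul_add_div h3j,
          show 3 ^ (r - j) * rho g + Qv l / 3 ^ j
            = 3 * (3 ^ (r - j - 1) * rho g) + Qv l / 3 ^ j by rw [hE]; ring,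
          Nat.mul_add_mod]
      rw [e3, e4] at hdig
      have hmod' : p' % 3 ^ j = Qv l % 3 ^ j := by rw [e1, hmod, e2]
      have IH := ih j p' hp'lt hmod' hdig
      have hne : p' ≠ u.length := by
        rw [hq]; intro hcon; exact hdig (by rw [hcon])
      have hidx : (g :: l).length - 1 - j = (r - 1 - j) + 1 := by rw [hglen]; omega
      have hL : (Trev (g :: l)).getD p B.bq = (Trev l).getD p' B.bq := by
        rw [hword, ← hdm]
        rcases (by omega : c = 0 ∨ c = 1 ∨ c = 2) with h0 | h0 | h0 <;> rw [h0]
        · rw [show 3 ^ r * 0 + p' = p' by ring,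
            List.getD_append _ _ _ _ (by rw [hlenX]; omega), he, getD_mid u w s0 B.bq _ _ hne]
        · rw [List.getD_append_right _ _ _ _ (by rw [hlenX]; omega),
            show 3 ^ r * 1 + p' - (u ++ s0 :: w).length = p' by rw [hlenX]; omega,
            List.getD_append _ _ _ _ (by rw [hlenX]; omega), he, getD_mid u w s1 B.bq _ _ hne]
        · rw [List.getD_append_right _ _ _ _ (by rw [hlenX]; omega),
            List.getD_append_right _ _ _ _ (by rw [hlenX, hlenX]; omega),
            show 3 ^ r * 2 + p' - (u ++ s0 :: w).length - (u ++ s1 :: w).length = p' by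
              rw [hlenX, hlenX]; omega,
            he, getD_mid u w s2 B.bq _ _ hne]
      rw [hL, IH, hidx, List.getD_cons_succ, e3]
    · -- j = r
      subst hjr
      have hpQ : p' = Qv l := by
        rw [hp', hmod, hQQ, show rho g * 3 ^ r + Qv l = 3 ^ r * rho g + Qv l by ring,
          Nat.mul_add_mod, Nat.mod_eq_of_lt hQlt]
      have hdigc : p / 3 ^ r % 3 = c := by rw [← hc, Nat.mod_eq_of_lt hc3]
      have hidx : (g :: l).length - 1 - r = 0 := by rw [hglen]; omega
      rw [hidx, List.getD_cons_zero, hdigc, hword, ← hdm, hpQ, hs]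
      rcases (by omega : c = 0 ∨ c = 1 ∨ c = 2) with h0 | h0 | h0 <;> rw [h0]
      · rw [show 3 ^ r * 0 + Qv l = Qv l by ring,
          List.getD_append _ _ _ _ (by rw [hlenX]; omega),
          List.getD_append_right _ _ _ _ (by omega),
          show Qv l - u.length = 0 by omega, List.getD_cons_zero]
        rfl
      · rw [List.getD_append_right _ _ _ _ (by rw [hlenX]; omega),
          show 3 ^ r * 1 + Qv l - (u ++ s0 :: w).length = Qv l by rw [hlenX]; omega,
          List.getD_append _ _ _ _ (by rw [hlenX]; omega),
          List.getD_append_right _ _ _ _ (by omega),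
          show Qv l - u.length = 0 by omega, List.getD_cons_zero]
        rfl
      · rw [List.getD_append_right _ _ _ _ (by rw [hlenX]; omega),
          List.getD_append_right _ _ _ _ (by rw [hlenX, hlenX]; omega),
          show 3 ^ r * 2 + Qv l - (u ++ s0 :: w).length - (u ++ s1 :: w).length = Qv l by
            rw [hlenX, hlenX]; omega,
          List.getD_append_right _ _ _ _ (by omega),
          show Qv l - u.length = 0 by omega, List.getD_cons_zero]
        rfl
    · -- r < j : impossible
      exfalso
      have hple : p < 3 ^ j := lt_of_lt_of_le (by simpa using hp)
        (pow_le_pow_right₀ (by norm_num) hjr)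
      have hQle : Qv (g :: l) < 3 ^ j := by
        have h1 : rho g * 3 ^ r ≤ 2 * 3 ^ r := Nat.mul_le_mul_right _ (by omega)
        have h2 : (3:ℕ) ^ (r + 1) ≤ 3 ^ j := pow_le_pow_right₀ (by norm_num) hjr
        rw [hQQ]; omega
      rw [Nat.mod_eq_of_lt hple, Nat.mod_eq_of_lt hQle] at hmod
      exact hdig (by rw [hmod])

lemma pat_ne (g : A) (c1 c2 : ℕ) (h1 : c1 < 3) (h2 : c2 < 3) (hne : c1 ≠ c2) :
    (pat g).getD c1 B.bq ≠ (pat g).getD c2 B.bq := by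
  cases g <;> interval_cases c1 <;> interval_cases c2 <;> simp_all [pat]

lemma exists_mod (M ρ i n : ℕ) (hρ : ρ < M) (hMn : M ≤ n) :
    ∃ p, i ≤ p ∧ p < i + n ∧ p % M = ρ := by
  have hM : 0 < M := by omega
  have hdm : M * (i / M) + i % M = i := Nat.div_add_mod i M
  have him : i % M < M := Nat.mod_lt _ hM
  refine ⟨M * (i / M) + (if i % M ≤ ρ then 0 else M) + ρ, ?_, ?_, ?_⟩
  · split_ifs with h <;> omega
  · split_ifs with h <;> omega
  · rcases le_or_gt (i % M) ρ with h | h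
    · rw [if_pos h]
      rw [show M * (i / M) + 0 + ρ = M * (i / M) + ρ by ring, Nat.mul_add_mod,
        Nat.mod_eq_of_lt hρ]
    · rw [if_neg (by omega)]
      rw [show M * (i / M) + M + ρ = M * (i / M + 1) + ρ by ring, Nat.mul_add_mod,
        Nat.mod_eq_of_lt hρ]

theorem stmt_9 (t : List A) (i n : ℕ) (hn : 1 ≤ n) (hbd : i + 2 * n ≤ 3 ^ t.length)
    (hsq : ∀ j < n, (stewT t).getD (i + j) B.bq = (stewT t).getD (i + n + j) B.bq) :
    ∃ k : ℕ, n = 3 ^ k ∨ n = 2 * 3 ^ k := by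
  obtain ⟨v, m, hm3, hnm⟩ := Nat.exists_eq_pow_mul_and_not_dvd (show n ≠ 0 by omega) 3
    (by norm_num)
  by_cases hm1 : m = 1
  · exact ⟨v, Or.inl (by rw [hnm, hm1, mul_one])⟩
  by_cases hm2 : m = 2
  · exact ⟨v, Or.inr (by rw [hnm, hm2]; ring)⟩
  exfalso
  set l := t.reverse with hlrev
  have hlt : l.length = t.length := List.length_reverse
  set r := t.length with hrdef
  set q := Qv l with hqdef
  have hm0 : m ≠ 0 := by rintro rfl; simp at hnm; omega
  have hmm3 : m % 3 ≠ 0 := fun h => hm3 (Nat.dvd_of_mod_eq_zero h)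
  have hm4 : 4 ≤ m := by omega
  set P := (3:ℕ) ^ v with hPdef
  have hP : 0 < P := pow_pos (by norm_num) v
  have hM : (3:ℕ) ^ (v + 1) = P * 3 := pow_succ 3 v
  have hMn : P * 3 ≤ n := by
    rw [hnm]
    calc P * 3 ≤ P * m := Nat.mul_le_mul_left _ (by omega)
    _ = 3 ^ v * m := rfl
  have hq3 : q / P % 3 < 3 := Nat.mod_lt _ (by norm_num)
  -- choose the digit c
  obtain ⟨c, hc3, hcne, hcm⟩ : ∃ c, c < 3 ∧ c ≠ q / P % 3 ∧ (c + m) % 3 ≠ q / P % 3 := by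
    refine ⟨if ((q / P % 3 + 1) % 3 + m) % 3 = q / P % 3 then (q / P % 3 + 2) % 3
      else (q / P % 3 + 1) % 3, ?_, ?_, ?_⟩ <;> split_ifs with h <;> omega
  -- find p ≡ q % P + c * P  (mod P * 3) in [i, i + n)
  have hρlt : q % P + c * P < P * 3 := by
    have h1 : q % P < P := Nat.mod_lt _ hP
    have h2 : c * P ≤ 2 * P := Nat.mul_le_mul_right _ (by omega)
    omega
  obtain ⟨p, hpi, hpin, hpmod⟩ := exists_mod (P * 3) (q % P + c * P) i n hρlt hMn
  -- facts about p
  have hplow : p % P = q % P := by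
    have h1 : p % P = p % (P * 3) % P := (Nat.mod_mod_of_dvd p ⟨3, rfl⟩).symm
    rw [h1, hpmod, Nat.add_mul_mod_self_right, Nat.mod_mod_of_dvd _ (dvd_refl P)]
  have hpd : p / P % 3 = c := by
    rw [← Nat.mod_mul_right_div_self, hpmod, Nat.add_mul_div_right _ _ hP,
      Nat.div_eq_of_lt (Nat.mod_lt _ hP)]
    omega
  have hnP : n = P * m := hnm
  have hpnlow : (p + n) % P = q % P := by
    rw [hnP, Nat.add_mul_mod_self_left, hplow]
  have hpnd : (p + n) / P % 3 = (c + m) % 3 := by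
    rw [hnP, show p + P * m = p + m * P by ring, Nat.add_mul_div_right _ _ hP]
    omega
  -- bounds
  have hvr : v < r := by
    have h1 : P ≤ n := by
      rw [hnP]
      exact Nat.le_mul_of_pos_right P (by omega)
    have h2 : P < 3 ^ r := by omega
    exact (pow_lt_pow_iff_right₀ (by norm_num)).mp h2
  have hplt : p < 3 ^ r := by omega
  have hpnlt : p + n < 3 ^ r := by omega
  have hll : l.length = r := hlt
  -- apply the structural lemma at p and p + n
  have hS1 := lemS l v p (by rw [hll]; exact hplt) (by rw [← hqdef, ← hPdef]; omega)
    (by rw [← hqdef, ← hPdef, hpd]; exact hcne)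
  have hS2 := lemS l v (p + n) (by rw [hll]; exact hpnlt) (by rw [← hqdef, ← hPdef]; omega)
    (by rw [← hqdef, ← hPdef, hpnd]; exact hcm)
  -- the square condition at position p - i
  have hj : p - i < n := by omega
  have hsq' := hsq (p - i) hj
  rw [show i + (p - i) = p by omega, show i + n + (p - i) = p + n by omega] at hsq'
  have hstew : stewT t = Trev l := rfl
  rw [hstew, hS1, hS2] at hsq'
  rw [← hPdef] at hsq'
  rw [hpd, hpnd] at hsq'
  exact pat_ne _ c ((c + m) % 3) hc3 (Nat.mod_lt _ (by norm_num)) (by omega) hsq'
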